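/- Let H(n,h) be the number of covering relations (edges of the Hasse diagram) in the poset of independent subsets of the h-th power of a path on n vertices, ordered by inclusion. Then H(n,h) = Σ_{k≥1} k · C(n - h*k + h, k), where the sum ranges over k with 1 ≤ k ≤ ⌈n/(h+1)⌉. -/

import Mathlib

open Finset

/-- The independent subsets of the h-th power of the path on vertices {1,...,n}:
subsets of {1,...,n} in which any two distinct elements differ by more than h. -/
def Indep (n h : ℕ) : Finset (Finset ℕ) :=
  (Finset.Icc 1 n).powerset.filter (fun S => ∀ a ∈ S, ∀ b ∈ S, a < b → h < b - a)

/-- The independent k-subsets. -/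
def IndepK (n h k : ℕ) : Finset (Finset ℕ) :=
  (Indep n h).filter (fun S => S.card = k)

/-- The number of covering pairs (S,T): T ⊆ S, |S| = |T| + 1, both independent. -/
def coverCount (n h : ℕ) : ℕ :=
  ((Indep n h ×ˢ Indep n h).filter
    (fun p => p.2 ⊆ p.1 ∧ p.1.card = p.2.card + 1)).card

/-!
Every independent set `S` covers exactly `#S` sets (delete one element; independence is inherited by
subsets), so `H(n, h) = ∑ₛ #S = ∑ₖ k · #{independent k-sets}`. Splitting the independent `(k+1)`-subsets
of `{1, …, m+1}` according to whether they contain `m + 1` gives the recursion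
`I(m+1, k+1) = I(m, k+1) + I(m-h, k)`, since removing `m + 1` leaves an independent set inside
`{1, …, m-h}`. The same recursion is satisfied by `(n + h - h k).choose k`, whose terms vanish
beyond `k = ⌊(n+h)/(h+1)⌋ = ⌈n/(h+1)⌉`.
-/

namespace Finset

variable {α : Type*} [DecidableEq α]

theorem covBy_iff_subset_and_card_eq {s t : Finset α} : t ⋖ s ↔ t ⊆ s ∧ #s = #t + 1 := by
  rw [covBy_iff_card_sdiff_eq_one]
  refine and_congr_right fun hts => ?_
  have := card_le_card hts
  rw [card_sdiff_of_subset hts]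
  omega

theorem card_filter_subset_and_card_eq_succ (s : Finset α) :
    #(s.powerset.filter fun t => t ⊆ s ∧ #s = #t + 1) = #s := by
  have : (s.powerset.filter fun t => t ⊆ s ∧ #s = #t + 1) = s.image s.erase := by
    ext t
    rw [mem_filter, mem_powerset, ← covBy_iff_subset_and_card_eq, covBy_iff_exists_erase,
      mem_image]
    exact ⟨And.right, fun h => ⟨by obtain ⟨a, -, rfl⟩ := h; exact erase_subset a s, h⟩⟩
  rw [this, card_image_of_injOn s.erase_injOn]

end Finset

theorem mem_Indep {n h : ℕ} {S : Finset ℕ} :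
    S ∈ Indep n h ↔ S ⊆ Icc 1 n ∧ ∀ a ∈ S, ∀ b ∈ S, a < b → h < b - a := by
  rw [Indep, mem_filter, mem_powerset]

theorem mem_IndepK {n h k : ℕ} {S : Finset ℕ} : S ∈ IndepK n h k ↔ S ∈ Indep n h ∧ #S = k :=
  mem_filter

theorem mem_Indep_of_subset {n h : ℕ} {S T : Finset ℕ} (hS : S ∈ Indep n h) (hT : T ⊆ S) :
    T ∈ Indep n h := by
  rw [mem_Indep] at hS ⊢
  exact ⟨hT.trans hS.1, fun a ha b hb => hS.2 a (hT ha) b (hT hb)⟩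

theorem coverCount_eq_sum_card (n h : ℕ) : coverCount n h = ∑ S ∈ Indep n h, #S := by
  rw [coverCount, card_filter, sum_product]
  refine sum_congr rfl fun S hS => ?_
  rw [← card_filter, ← card_filter_subset_and_card_eq_succ S]
  congr 1
  ext T
  simp only [mem_filter, mem_powerset]
  exact ⟨fun h => ⟨h.2.1, h.2⟩, fun h => ⟨mem_Indep_of_subset hS h.1, h.2⟩⟩

theorem notMem_of_mem_Indep {n h a : ℕ} {S : Finset ℕ} (hS : S ∈ Indep n h) (ha : n < a) :
    a ∉ S := fun haS => by
  have := (mem_Indep.1 hS).1 haS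
  rw [mem_Icc] at this
  omega

theorem mem_Indep_succ_iff {m h : ℕ} {S : Finset ℕ} (hS : m + 1 ∉ S) :
    S ∈ Indep (m + 1) h ↔ S ∈ Indep m h := by
  rw [mem_Indep, mem_Indep, and_congr_left_iff]
  refine fun _ => ⟨fun hsub a ha => ?_, fun hsub => hsub.trans (Icc_subset_Icc_right m.le_succ)⟩
  have := mem_Icc.1 (hsub ha)
  have : a ≠ m + 1 := by rintro rfl; exact hS ha
  exact mem_Icc.2 (by omega)

theorem insert_mem_Indep_succ_iff {m h : ℕ} {T : Finset ℕ} (hT : m + 1 ∉ T) :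
    insert (m + 1) T ∈ Indep (m + 1) h ↔ T ∈ Indep (m - h) h := by
  simp only [mem_Indep, subset_iff, forall_mem_insert, mem_Icc]
  constructor
  · rintro ⟨⟨-, hsub⟩, -, hind⟩
    refine ⟨fun a ha => ?_, fun a ha => (hind a ha).2⟩
    have : a ≠ m + 1 := by rintro rfl; exact hT ha
    have := hsub a ha
    have := (hind a ha).1 (by omega)
    omega
  · rintro ⟨hsub, hind⟩
    refine ⟨⟨by omega, fun a ha => ?_⟩, ⟨by omega, fun a ha => ?_⟩, fun a ha => ⟨?_, hind a ha⟩⟩ <;>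
    · have := hsub ha
      omega

theorem IndepK_zero_right (n h : ℕ) : IndepK n h 0 = {∅} := by
  ext S
  rw [mem_IndepK, mem_singleton, card_eq_zero, and_iff_right_iff_imp]
  rintro rfl
  simp [mem_Indep]

theorem IndepK_zero_succ (h k : ℕ) : IndepK 0 h (k + 1) = ∅ := by
  refine eq_empty_of_forall_notMem fun S hS => ?_
  obtain ⟨hS, hcard⟩ := mem_IndepK.1 hS
  have : S ⊆ ∅ := (mem_Indep.1 hS).1.trans (by simp)
  rw [subset_empty.1 this, card_empty] at hcard
  omega

theorem filter_notMem_IndepK_succ (m h k : ℕ) :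
    (IndepK (m + 1) h k).filter (m + 1 ∉ ·) = IndepK m h k := by
  ext S
  rw [mem_filter, mem_IndepK, mem_IndepK]
  constructor
  · rintro ⟨⟨hS, hcard⟩, hm⟩
    exact ⟨(mem_Indep_succ_iff hm).1 hS, hcard⟩
  · rintro ⟨hS, hcard⟩
    have hm := notMem_of_mem_Indep hS m.lt_succ_self
    exact ⟨⟨(mem_Indep_succ_iff hm).2 hS, hcard⟩, hm⟩

theorem card_filter_mem_IndepK_succ (m h k : ℕ) :
    #((IndepK (m + 1) h (k + 1)).filter (m + 1 ∈ ·)) = #(IndepK (m - h) h k) := by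
  have hnotMem : ∀ T ∈ IndepK (m - h) h k, m + 1 ∉ T := fun T hT =>
    notMem_of_mem_Indep (mem_IndepK.1 hT).1 (by omega)
  refine card_nbij' (·.erase (m + 1)) (insert (m + 1)) (fun S hS => ?_) (fun T hT => ?_)
    (fun S hS => insert_erase (mem_filter.1 hS).2) (fun T hT' => erase_insert (hnotMem T hT'))
  · obtain ⟨hS, hm⟩ := mem_filter.1 hS
    obtain ⟨hS, hcard⟩ := mem_IndepK.1 hS
    rw [← insert_erase hm, insert_mem_Indep_succ_iff (notMem_erase _ _)] at hS
    exact mem_IndepK.2 ⟨hS, by rw [card_erase_of_mem hm, hcard, Nat.add_sub_cancel]⟩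
  · obtain ⟨hT', hcard⟩ := mem_IndepK.1 hT
    refine mem_filter.2 ⟨mem_IndepK.2 ⟨(insert_mem_Indep_succ_iff (hnotMem T hT)).2 hT', ?_⟩,
      mem_insert_self _ _⟩
    rw [card_insert_of_notMem (hnotMem T hT), hcard]

theorem card_IndepK_succ_succ (m h k : ℕ) :
    #(IndepK (m + 1) h (k + 1)) = #(IndepK m h (k + 1)) + #(IndepK (m - h) h k) := by
  rw [← card_filter_add_card_filter_not (m + 1 ∈ ·), card_filter_mem_IndepK_succ,
    filter_notMem_IndepK_succ, add_comm]

/-- Pascal's rule in the shifted form satisfied by `k ↦ (n + h - h * k).choose k`.  For `k ≥ 1`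
the three upper arguments are `m + 1 - h * k`, `m - h * k`, `m - h * k`, and truncated subtraction
makes both sides vanish once `h * k > m`. -/
theorem choose_add_sub_mul_succ_succ (m h k : ℕ) :
    (m + 1 + h - h * (k + 1)).choose (k + 1) =
      (m + h - h * (k + 1)).choose (k + 1) + (m - h + h - h * k).choose k := by
  rcases Nat.eq_zero_or_pos k with rfl | hk
  · simp
  have hh : h ≤ h * k := Nat.le_mul_of_pos_right h hk
  rw [show m + 1 + h - h * (k + 1) = m + 1 - h * k by rw [mul_add_one]; omega,
    show m + h - h * (k + 1) = m - h * k by rw [mul_add_one]; omega,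
    show m - h + h - h * k = m - h * k by omega]
  rcases le_or_gt (h * k) m with hle | hlt
  · rw [show m + 1 - h * k = m - h * k + 1 by omega, Nat.choose_succ_succ', add_comm]
  · rw [show m + 1 - h * k = 0 by omega, show m - h * k = 0 by omega,
      Nat.choose_zero_succ, Nat.choose_eq_zero_of_lt hk]

theorem card_IndepK (n h k : ℕ) : #(IndepK n h k) = (n + h - h * k).choose k := by
  induction n using Nat.strong_induction_on generalizing k with
  | _ n ih =>
    match n, k with
    | n, 0 => rw [IndepK_zero_right, card_singleton, Nat.choose_zero_right]
    | 0, k + 1 =>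
      rw [IndepK_zero_succ, card_empty, Nat.choose_eq_zero_of_lt (by rw [mul_add_one]; omega)]
    | m + 1, k + 1 =>
      rw [card_IndepK_succ_succ, ih m (by omega), ih (m - h) (by omega),
        choose_add_sub_mul_succ_succ]

theorem sum_card_Indep (n h : ℕ) :
    ∑ S ∈ Indep n h, #S = ∑ k ∈ range (n + 1), k * (n + h - h * k).choose k := by
  have hcard : ∀ S ∈ Indep n h, #S ∈ range (n + 1) := fun S hS => by
    have := card_le_card (mem_Indep.1 hS).1
    rw [Nat.card_Icc] at this
    exact mem_range.2 (by omega)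
  rw [← sum_fiberwise_of_maps_to hcard]
  refine sum_congr rfl fun k _ => ?_
  rw [sum_congr rfl fun S hS => (mem_filter.1 hS).2, sum_const, smul_eq_mul, mul_comm]
  exact congrArg (k * ·) (card_IndepK n h k)

theorem choose_add_sub_mul_eq_zero {n h k : ℕ} (hk : (n + h) / (h + 1) < k) :
    (n + h - h * k).choose k = 0 := by
  have hk0 : 0 < k := (Nat.zero_le _).trans_lt hk
  rw [Nat.div_lt_iff_lt_mul (by omega), mul_add_one, mul_comm] at hk
  exact Nat.choose_eq_zero_of_lt (by omega)

theorem stmt6 (n h : ℕ) :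
    coverCount n h =
      ∑ k ∈ Finset.Icc 1 ((n + h) / (h + 1)), k * Nat.choose (n + h - h * k) k := by
  rw [coverCount_eq_sum_card, sum_card_Indep]
  refine (sum_subset (fun k hk => ?_) fun k _ hk => ?_).symm
  · obtain ⟨hk1, hk⟩ := mem_Icc.1 hk
    rw [Nat.le_div_iff_mul_le (by omega), mul_add_one] at hk
    have : h ≤ k * h := Nat.le_mul_of_pos_left h hk1
    exact mem_range.2 (by omega)
  · rcases Nat.lt_or_ge ((n + h) / (h + 1)) k with hk' | hk'
    · rw [choose_add_sub_mul_eq_zero hk', mul_zero]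
    · obtain rfl : k = 0 := by simp only [mem_Icc, not_and, not_le] at hk; omega
      rw [zero_mul]
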